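/- arXiv:2011.01752 — 5 statements merged into one kernel-verified Lean document; each statement's English description precedes it below -/
import Mathlib

section
/- Let n ≥ 1 and let H_t(x) be a smooth positive function on an open subset of (0,1) × Δ_n (Δ_n the Weyl chamber x_1 < ⋯ < x_n) solving the backward heat equation -∂_t H_t = (1/(2n)) Δ H_t. Define S_t(x) = (1/n) log( H_t(x) / ∏_{i<j}(x_i - x_j) ). Then S_t satisfies -∂_t S_t = (1/(2n)) Δ S_t + (1/2) Σ_{i=1}^n (∂_{x_i} S_t)² + Σ_{i=1}^n [ (1/n) Σ_{j≠i} 1/(x_i - x_j) ] ∂_{x_i} S_t. -/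
open Topology Filter

/-- Partial derivative of `f : ℝⁿ → ℝ` in the `i`-th coordinate. -/
noncomputable def pd {n : ℕ} (f : (Fin n → ℝ) → ℝ) (i : Fin n) (x : Fin n → ℝ) : ℝ :=
  deriv (fun y => f (Function.update x i y)) (x i)

/-- Laplacian of `f : ℝⁿ → ℝ`. -/
noncomputable def lap {n : ℕ} (f : (Fin n → ℝ) → ℝ) (x : Fin n → ℝ) : ℝ :=
  ∑ i : Fin n, iteratedDeriv 2 (fun y => f (Function.update x i y)) (x i)

lemma three_term {a b c : ℝ} (hab : a ≠ b) (hac : a ≠ c) (hbc : b ≠ c) :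
    (a-b)⁻¹*(a-c)⁻¹ + (b-c)⁻¹*(b-a)⁻¹ + (c-a)⁻¹*(c-b)⁻¹ = 0 := by
  have h1 : a - b ≠ 0 := sub_ne_zero.2 hab
  have h2 : a - c ≠ 0 := sub_ne_zero.2 hac
  have h3 : b - c ≠ 0 := sub_ne_zero.2 hbc
  have h4 : b - a ≠ 0 := sub_ne_zero.2 hab.symm
  have h5 : c - a ≠ 0 := sub_ne_zero.2 hac.symm
  have h6 : c - b ≠ 0 := sub_ne_zero.2 hbc.symm
  field_simp
  ring

lemma triple_sum_zero {n : ℕ} (x : Fin n → ℝ) (hx : Function.Injective x) :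
    ∑ i : Fin n, ∑ j : Fin n, ∑ k : Fin n,
      (if i ≠ j ∧ i ≠ k ∧ j ≠ k then (x i - x j)⁻¹ * (x i - x k)⁻¹ else 0) = 0 := by
  set F : Fin n × Fin n × Fin n → ℝ := fun q =>
    if q.1 ≠ q.2.1 ∧ q.1 ≠ q.2.2 ∧ q.2.1 ≠ q.2.2 then
      (x q.1 - x q.2.1)⁻¹ * (x q.1 - x q.2.2)⁻¹ else 0 with hF
  have hconv : ∑ i : Fin n, ∑ j : Fin n, ∑ k : Fin n,
      (if i ≠ j ∧ i ≠ k ∧ j ≠ k then (x i - x j)⁻¹ * (x i - x k)⁻¹ else 0)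
      = ∑ q : Fin n × Fin n × Fin n, F q := by
    rw [Fintype.sum_prod_type]
    congr 1; funext i
    rw [Fintype.sum_prod_type]
  rw [hconv]
  set e : (Fin n × Fin n × Fin n) ≃ (Fin n × Fin n × Fin n) :=
    ⟨fun q => (q.2.1, q.2.2, q.1), fun q => (q.2.2, q.1, q.2.1),
     fun q => rfl, fun q => rfl⟩ with he
  have h1 : ∑ q, F (e q) = ∑ q, F q := Equiv.sum_comp e F
  have h2 : ∑ q, F (e (e q)) = ∑ q, F q :=
    (Equiv.sum_comp e fun q => F (e q)).trans h1
  have h3 : ∑ q : Fin n × Fin n × Fin n, (F q + F (e q) + F (e (e q))) = 0 := by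
    apply Finset.sum_eq_zero
    intro q _
    obtain ⟨i, j, k⟩ := q
    by_cases hd : i ≠ j ∧ i ≠ k ∧ j ≠ k
    · obtain ⟨hij, hik, hjk⟩ := hd
      have e1 : F (i, j, k) = (x i - x j)⁻¹ * (x i - x k)⁻¹ := if_pos ⟨hij, hik, hjk⟩
      have e2 : F (e (i, j, k)) = (x j - x k)⁻¹ * (x j - x i)⁻¹ :=
        if_pos ⟨hjk, hij.symm, hik.symm⟩
      have e3 : F (e (e (i, j, k))) = (x k - x i)⁻¹ * (x k - x j)⁻¹ :=
        if_pos ⟨hik.symm, hjk.symm, hij⟩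
      rw [e1, e2, e3]
      exact three_term (fun h => hij (hx h)) (fun h => hik (hx h)) (fun h => hjk (hx h))
    · have e1 : F (i, j, k) = 0 := if_neg hd
      have e2 : F (e (i, j, k)) = 0 := by
        apply if_neg; simp only [ne_eq] at hd ⊢; tauto
      have e3 : F (e (e (i, j, k))) = 0 := by
        apply if_neg; simp only [ne_eq] at hd ⊢; tauto
      rw [e1, e2, e3]; ring
  rw [Finset.sum_add_distrib, Finset.sum_add_distrib, h1, h2] at h3
  linarith

lemma pair_reindex {n : ℕ} (i : Fin n) (F : Fin n → ℝ) :
    ∑ p ∈ Finset.univ.filter (fun p : Fin n × Fin n => p.1 < p.2),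
      (if p.1 = i then F p.2 else if p.2 = i then F p.1 else 0)
    = ∑ j ∈ Finset.univ.filter (· ≠ i), F j := by
  rw [Finset.sum_filter, Fintype.sum_prod_type, Finset.sum_filter]
  have key : ∀ a b : Fin n,
      (if a < b then (if a = i then F b else if b = i then F a else 0) else 0)
      = (if a = i then (if i < b then F b else 0) else 0)
        + (if b = i then (if a < i then F a else 0) else 0) := by
    intro a b
    by_cases hai : a = i <;> by_cases hbi : b = i <;>
      simp [hai, hbi, lt_irrefl] <;> split_ifs <;> simp_all [lt_irrefl]
  simp_rw [key, Finset.sum_add_distrib]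
  have h1 : ∀ a : Fin n, (∑ b : Fin n, if a = i then (if i < b then F b else 0) else 0)
      = (if a = i then (∑ b : Fin n, if i < b then F b else 0) else 0) := by
    intro a; split_ifs <;> simp
  simp_rw [h1]
  rw [Finset.sum_ite_eq' Finset.univ i (fun _ => ∑ b : Fin n, if i < b then F b else 0)]
  have h2 : ∀ a : Fin n, (∑ b : Fin n, if b = i then (if a < i then F a else 0) else 0)
      = (if a < i then F a else 0) := by
    intro a
    rw [Finset.sum_ite_eq' Finset.univ i (fun _ => if a < i then F a else 0)]
    simp
  simp_rw [h2]
  simp only [Finset.mem_univ, if_true]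
  rw [← Finset.sum_add_distrib]
  apply Finset.sum_congr rfl
  intro j _
  rcases lt_trichotomy j i with h | h | h
  · simp [h, h.ne, not_lt.2 h.le, lt_irrefl]
  · simp [h, lt_irrefl]
  · simp [h, h.ne', not_lt.2 h.le]

lemma sum_sq_eq {n : ℕ} (x : Fin n → ℝ) (hx : Function.Injective x) :
    ∑ i : Fin n, (∑ j ∈ Finset.univ.filter (· ≠ i), (x i - x j)⁻¹)^2
    = ∑ i : Fin n, ∑ j ∈ Finset.univ.filter (· ≠ i), ((x i - x j)⁻¹)^2 := by
  have h0 := triple_sum_zero x hx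
  have key : ∀ i : Fin n,
      (∑ j ∈ Finset.univ.filter (· ≠ i), (x i - x j)⁻¹)^2
      = (∑ j ∈ Finset.univ.filter (· ≠ i), ((x i - x j)⁻¹)^2)
        + ∑ j : Fin n, ∑ k : Fin n,
            (if i ≠ j ∧ i ≠ k ∧ j ≠ k then (x i - x j)⁻¹ * (x i - x k)⁻¹ else 0) := by
    intro i
    rw [sq, Finset.sum_mul_sum]
    have hsplit : ∀ j ∈ Finset.univ.filter (· ≠ i),
        (∑ k ∈ Finset.univ.filter (· ≠ i), (x i - x j)⁻¹ * (x i - x k)⁻¹)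
        = ((x i - x j)⁻¹)^2
          + ∑ k ∈ Finset.univ.filter (· ≠ i),
              (if k ≠ j then (x i - x j)⁻¹ * (x i - x k)⁻¹ else 0) := by
      intro j hj
      have hdiag : ∑ k ∈ Finset.univ.filter (· ≠ i),
          (if k = j then (x i - x j)⁻¹ * (x i - x k)⁻¹ else 0) = ((x i - x j)⁻¹)^2 := by
        rw [Finset.sum_ite_eq' (Finset.univ.filter (· ≠ i)) j
          (fun k => (x i - x j)⁻¹ * (x i - x k)⁻¹), if_pos hj]
        ring
      rw [← hdiag, ← Finset.sum_add_distrib]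
      apply Finset.sum_congr rfl
      intro k _
      by_cases h : k = j <;> simp [h]
    rw [Finset.sum_congr rfl hsplit, Finset.sum_add_distrib]
    congr 1
    rw [Finset.sum_filter]
    apply Finset.sum_congr rfl
    intro j _
    rw [Finset.sum_filter]
    by_cases h1 : j = i
    · simp only [h1, ne_eq, not_true_eq_false, if_false]
      apply (Finset.sum_eq_zero ?_).symm
      intro k _
      rw [if_neg]; rintro ⟨h, -⟩; exact h
    · simp only [ne_eq, h1, not_false_eq_true, if_true]
      apply Finset.sum_congr rfl
      intro k _
      by_cases h2 : k = i
      · simp only [h2, ne_eq, not_true_eq_false, if_false]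
        rw [if_neg]; rintro ⟨-, h, -⟩; exact h
      · simp only [ne_eq, h2, not_false_eq_true, if_true]
        by_cases h3 : k = j
        · rw [if_neg (by simp [h3]), if_neg (by rintro ⟨-, -, h⟩; exact h h3.symm)]
        · rw [if_pos (by simp [h3]), if_pos]
          exact ⟨fun h => h1 h.symm, fun h => h2 h.symm, fun h => h3 h.symm⟩
  calc ∑ i : Fin n, (∑ j ∈ Finset.univ.filter (· ≠ i), (x i - x j)⁻¹)^2
      = ∑ i : Fin n, ((∑ j ∈ Finset.univ.filter (· ≠ i), ((x i - x j)⁻¹)^2)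
        + ∑ j : Fin n, ∑ k : Fin n,
            (if i ≠ j ∧ i ≠ k ∧ j ≠ k then (x i - x j)⁻¹ * (x i - x k)⁻¹ else 0)) :=
        Finset.sum_congr rfl fun i _ => key i
    _ = _ := by rw [Finset.sum_add_distrib, h0, add_zero]

lemma update_inj {n : ℕ} (x : Fin n → ℝ) (hinj : Function.Injective x) (i : Fin n) (y : ℝ)
    (hy : ∀ j, j ≠ i → y - x j ≠ 0) : Function.Injective (Function.update x i y) := by
  intro a b hab
  by_cases ha : a = i <;> by_cases hb : b = i
  · rw [ha, hb]
  · rw [ha, Function.update_self, Function.update_of_ne hb] at hab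
    exact absurd (sub_eq_zero.2 hab) (hy b hb)
  · rw [hb, Function.update_self, Function.update_of_ne ha] at hab
    exact absurd (sub_eq_zero.2 hab.symm) (hy a ha)
  · rw [Function.update_of_ne ha, Function.update_of_ne hb] at hab
    exact hinj hab

lemma vprod_ne_zero {n : ℕ} (z : Fin n → ℝ) (hz : Function.Injective z) :
    ∏ p ∈ Finset.univ.filter (fun p : Fin n × Fin n => p.1 < p.2), (z p.1 - z p.2) ≠ 0 :=
  Finset.prod_ne_zero_iff.2 fun p hp =>
    sub_ne_zero.2 fun e => (Finset.mem_filter.1 hp).2.ne (hz e)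

lemma log_vprod {n : ℕ} (x : Fin n → ℝ) (i : Fin n) (y : ℝ)
    (hy : ∀ j, j ≠ i → y - x j ≠ 0) (hne : ∀ j k : Fin n, j ≠ k → x j - x k ≠ 0) :
    Real.log (∏ p ∈ Finset.univ.filter (fun p : Fin n × Fin n => p.1 < p.2),
        (Function.update x i y p.1 - Function.update x i y p.2))
    = (∑ j ∈ Finset.univ.filter (· ≠ i), Real.log (y - x j))
      + ∑ p ∈ Finset.univ.filter (fun p : Fin n × Fin n => p.1 < p.2),
          (if p.1 = i then 0 else if p.2 = i then 0 else Real.log (x p.1 - x p.2)) := by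
  rw [Real.log_prod]
  · rw [← pair_reindex i (fun j => Real.log (y - x j)), ← Finset.sum_add_distrib]
    apply Finset.sum_congr rfl
    intro p hp
    have hlt := (Finset.mem_filter.1 hp).2
    by_cases h1 : p.1 = i
    · have h2 : p.2 ≠ i := by rw [← h1]; exact hlt.ne'
      rw [h1, Function.update_self, Function.update_of_ne h2, if_pos rfl, if_pos rfl,
        add_zero]
    · by_cases h2 : p.2 = i
      · rw [h2, Function.update_self, Function.update_of_ne h1, if_neg h1, if_neg h1,
          if_pos rfl, if_pos rfl, add_zero, ← Real.log_neg_eq_log, neg_sub]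
      · rw [Function.update_of_ne h1, Function.update_of_ne h2, if_neg h1, if_neg h1,
          if_neg h2, if_neg h2, zero_add]
  · intro p hp
    have hlt := (Finset.mem_filter.1 hp).2
    by_cases h1 : p.1 = i
    · have h2 : p.2 ≠ i := by rw [← h1]; exact hlt.ne'
      rw [h1, Function.update_self, Function.update_of_ne h2]
      exact hy p.2 h2
    · by_cases h2 : p.2 = i
      · rw [h2, Function.update_self, Function.update_of_ne h1]
        intro h
        exact hy p.1 h1 (by linarith [sub_eq_zero.1 h])
      · rw [Function.update_of_ne h1, Function.update_of_ne h2]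
        exact hne p.1 p.2 hlt.ne

lemma key_spatial {n : ℕ}
    (D : Set (ℝ × (Fin n → ℝ))) (hD : IsOpen D)
    (H : ℝ → (Fin n → ℝ) → ℝ)
    (hpos : ∀ p ∈ D, 0 < H p.1 p.2)
    (S : ℝ → (Fin n → ℝ) → ℝ)
    (hS : ∀ t x, S t x = (1 / n) * Real.log (H t x /
      ∏ p ∈ Finset.univ.filter (fun p : Fin n × Fin n => p.1 < p.2), (x p.1 - x p.2)))
    (t : ℝ) (x : Fin n → ℝ) (htx : (t, x) ∈ D)
    (hFC : ContDiffAt ℝ (⊤ : ℕ∞) (fun p : ℝ × (Fin n → ℝ) => H p.1 p.2) (t, x))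
    (hinj : Function.Injective x)
    (i : Fin n) :
    pd (S t) i x = (1/(n:ℝ)) * (deriv (fun y => H t (Function.update x i y)) (x i) / H t x
        - ∑ j ∈ Finset.univ.filter (· ≠ i), (x i - x j)⁻¹)
    ∧ iteratedDeriv 2 (fun y => S t (Function.update x i y)) (x i)
      = (1/(n:ℝ)) * (iteratedDeriv 2 (fun y => H t (Function.update x i y)) (x i) / H t x
          - (deriv (fun y => H t (Function.update x i y)) (x i) / H t x)^2
          + ∑ j ∈ Finset.univ.filter (· ≠ i), ((x i - x j)⁻¹)^2) := by
  have hne : ∀ j k : Fin n, j ≠ k → x j - x k ≠ 0 :=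
    fun j k h => sub_ne_zero.2 fun e => h (hinj e)
  have hh0 : 0 < H t x := hpos _ htx
  set ψ : ℝ → ℝ := fun y => H t (Function.update x i y) with hψdef
  set J : Finset (Fin n) := Finset.univ.filter (· ≠ i) with hJ
  set c0 : ℝ := ∑ p ∈ Finset.univ.filter (fun p : Fin n × Fin n => p.1 < p.2),
      (if p.1 = i then 0 else if p.2 = i then 0 else Real.log (x p.1 - x p.2)) with hc0
  set w : ℝ → ℝ := fun y => (1/(n:ℝ)) * (Real.log (ψ y)
      - ((∑ j ∈ J, Real.log (y - x j)) + c0)) with hw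
  -- smoothness of ψ
  have hupd : ContDiff ℝ (⊤ : ℕ∞) (fun y : ℝ => ((t : ℝ), Function.update x i y)) :=
    contDiff_const.prodMk (contDiff_update (⊤ : ℕ∞) x i)
  have hψC : ContDiffAt ℝ (⊤ : ℕ∞) ψ (x i) := by
    have h2 : ContDiffAt ℝ (⊤ : ℕ∞) (fun p : ℝ × (Fin n → ℝ) => H p.1 p.2)
        ((fun y : ℝ => ((t : ℝ), Function.update x i y)) (x i)) := by
      simp only [Function.update_eq_self]
      exact hFC
    exact (h2.comp (x i) hupd.contDiffAt :)
  obtain ⟨u, hu, hCu⟩ := hψC.contDiffOn (m := 3) (WithTop.coe_le_coe.2 le_top) (by simp)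
  have hxU : x i ∈ interior u := mem_interior_iff_mem_nhds.2 hu
  have hUopen : IsOpen (interior u) := isOpen_interior
  have hCU : ContDiffOn ℝ 3 ψ (interior u) := hCu.mono interior_subset
  have hψdiff : ∀ y ∈ interior u, DifferentiableAt ℝ ψ y := fun y hy =>
    (hCU.differentiableOn (by norm_num)).differentiableAt (hUopen.mem_nhds hy)
  have hd2' : ContDiffOn ℝ 2 (deriv ψ) (interior u) :=
    hCU.deriv_of_isOpen hUopen (by norm_num)
  have hdψdiff : DifferentiableAt ℝ (deriv ψ) (x i) :=
    (hd2'.differentiableOn (by norm_num)).differentiableAt (hUopen.mem_nhds hxU)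
  -- eventual facts
  have hevD : ∀ᶠ y in 𝓝 (x i), (t, Function.update x i y) ∈ D := by
    have hc : ContinuousAt (fun y : ℝ => ((t : ℝ), Function.update x i y)) (x i) :=
      hupd.continuous.continuousAt
    have : (t, Function.update x i (x i)) ∈ D := by
      simp only [Function.update_eq_self]; exact htx
    exact hc.preimage_mem_nhds (hD.mem_nhds this)
  have hevne : ∀ᶠ y in 𝓝 (x i), ∀ j ∈ J, y - x j ≠ 0 := by
    rw [eventually_all_finset]
    intro j hj
    have hji : j ≠ i := by simpa [hJ] using hj
    have hc : ContinuousAt (fun y : ℝ => y - x j) (x i) := by fun_prop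
    exact hc.eventually_ne (hne i j hji.symm)
  have hevU : ∀ᶠ y in 𝓝 (x i), y ∈ interior u := hUopen.eventually_mem hxU
  -- local form of S
  have hSev : (fun y => S t (Function.update x i y)) =ᶠ[𝓝 (x i)] w := by
    filter_upwards [hevD, hevne] with y h1 h2
    have h2' : ∀ j, j ≠ i → y - x j ≠ 0 := fun j hj => h2 j (by simp [hJ, hj])
    rw [hS, Real.log_div (hpos _ h1).ne'
      (vprod_ne_zero _ (update_inj x hinj i y h2')), log_vprod x i y h2' hne]
  -- first derivative of w, eventually
  have hw1 : ∀ᶠ y in 𝓝 (x i), HasDerivAt w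
      ((1/(n:ℝ)) * (deriv ψ y / ψ y - ∑ j ∈ J, (y - x j)⁻¹)) y := by
    filter_upwards [hevD, hevne, hevU] with y h1 h2 h3
    have hψy : HasDerivAt ψ (deriv ψ y) y := (hψdiff y h3).hasDerivAt
    have hψne : ψ y ≠ 0 := (hpos _ h1).ne'
    have hL : HasDerivAt (fun z => ∑ j ∈ J, Real.log (z - x j))
        (∑ j ∈ J, (y - x j)⁻¹) y := by
      apply HasDerivAt.fun_sum
      intro j hj
      have h := ((hasDerivAt_id y).sub_const (x j)).log (h2 j hj)
      simpa using h
    have := ((hψy.log hψne).sub (hL.add_const c0)).const_mul (1/(n:ℝ))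
    exact this
  constructor
  · show deriv (fun y => S t (Function.update x i y)) (x i) = _
    rw [hSev.deriv_eq, hw1.self_of_nhds.deriv]
    have : ψ (x i) = H t x := by simp [hψdef, Function.update_eq_self]
    rw [this]
  · have h2eq : iteratedDeriv 2 (fun y => S t (Function.update x i y)) (x i)
        = deriv (deriv (fun y => S t (Function.update x i y))) (x i) := by
      rw [iteratedDeriv_succ, iteratedDeriv_one]
    rw [h2eq]
    have hd1 : deriv (fun y => S t (Function.update x i y)) =ᶠ[𝓝 (x i)] deriv w :=
      hSev.deriv
    have hd2 : deriv w =ᶠ[𝓝 (x i)]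
        fun y => (1/(n:ℝ)) * (deriv ψ y / ψ y - ∑ j ∈ J, (y - x j)⁻¹) := by
      filter_upwards [hw1] with y hy
      exact hy.deriv
    rw [(hd1.trans hd2).deriv_eq]
    have hψx : ψ (x i) = H t x := by simp [hψdef, Function.update_eq_self]
    have hψne : ψ (x i) ≠ 0 := by rw [hψx]; exact hh0.ne'
    have hq : HasDerivAt (fun y => deriv ψ y / ψ y)
        ((deriv (deriv ψ) (x i) * ψ (x i) - deriv ψ (x i) * deriv ψ (x i)) / (ψ (x i))^2)
        (x i) :=
      hdψdiff.hasDerivAt.div (hψdiff _ hxU).hasDerivAt hψne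
    have hqs : HasDerivAt (fun y => ∑ j ∈ J, (y - x j)⁻¹)
        (∑ j ∈ J, (-1 / ((x i) - x j)^2)) (x i) := by
      apply HasDerivAt.fun_sum
      intro j hj
      have hji : j ≠ i := by simpa [hJ] using hj
      exact ((hasDerivAt_id (x i)).sub_const (x j)).inv (hne i j hji.symm)
    have hfin := (hq.sub hqs).const_mul (1/(n:ℝ))
    have hfd := hfin.deriv
    simp only [Pi.sub_apply] at hfd
    rw [hfd]
    have hb2 : deriv (deriv ψ) (x i) = iteratedDeriv 2 ψ (x i) := by
      rw [iteratedDeriv_succ, iteratedDeriv_one]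
    rw [hb2, hψx]
    have hsum : ∑ j ∈ J, (-1 / ((x i) - x j)^2) = -∑ j ∈ J, ((x i - x j)⁻¹)^2 := by
      rw [← Finset.sum_neg_distrib]
      apply Finset.sum_congr rfl
      intro j _
      rw [inv_pow]
      ring
    rw [hsum]
    have hH0 : H t x ≠ 0 := hh0.ne'
    have hkey : (iteratedDeriv 2 ψ (x i) * H t x - deriv ψ (x i) * deriv ψ (x i)) / (H t x)^2
        = iteratedDeriv 2 ψ (x i) / H t x - (deriv ψ (x i) / H t x)^2 := by
      field_simp
    rw [hkey]
    ring

/-- the inverse Cole–Hopf transform. If `H_t` is a smooth positive solution of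
the backward heat equation `-∂_t H = (1/2n) Δ H` on an open subset of `(0,1) × Δ_n`, then
`S_t(x) = (1/n) log(H_t(x)/∏_{i<j}(x_i-x_j))` satisfies
`-∂_t S = (1/2n) Δ S + (1/2) Σ_i (∂_i S)² + Σ_i [(1/n) Σ_{j≠i} 1/(x_i-x_j)] ∂_i S`. -/
theorem stmt_4 (n : ℕ) (hn : 1 ≤ n)
    (D : Set (ℝ × (Fin n → ℝ))) (hD : IsOpen D)
    (hDsub : D ⊆ Set.Ioo (0:ℝ) 1 ×ˢ {x : Fin n → ℝ | StrictMono x})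
    (H : ℝ → (Fin n → ℝ) → ℝ)
    (hsmooth : ContDiffOn ℝ (⊤ : ℕ∞) (fun p : ℝ × (Fin n → ℝ) => H p.1 p.2) D)
    (hpos : ∀ p ∈ D, 0 < H p.1 p.2)
    (hheat : ∀ p ∈ D, - deriv (fun s => H s p.2) p.1 = (1 / (2 * n)) * lap (H p.1) p.2)
    (S : ℝ → (Fin n → ℝ) → ℝ)
    (hS : ∀ t x, S t x = (1 / n) * Real.log (H t x /
      ∏ p ∈ Finset.univ.filter (fun p : Fin n × Fin n => p.1 < p.2), (x p.1 - x p.2)))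
    (t : ℝ) (x : Fin n → ℝ) (htx : (t, x) ∈ D) :
    - deriv (fun s => S s x) t
      = (1 / (2 * n)) * lap (S t) x
        + (1 / 2) * ∑ i : Fin n, (pd (S t) i x)^2
        + ∑ i : Fin n,
            ((1 / n) * ∑ j ∈ Finset.univ.filter (· ≠ i), 1 / (x i - x j)) * pd (S t) i x := by
  have hx : StrictMono x := (hDsub htx).2
  have hinj : Function.Injective x := hx.injective
  have hh0 : 0 < H t x := hpos _ htx
  have hH0 : H t x ≠ 0 := hh0.ne'
  have hN : (n:ℝ) ≠ 0 := Nat.cast_ne_zero.2 (by omega)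
  have hFC : ContDiffAt ℝ (⊤ : ℕ∞) (fun p : ℝ × (Fin n → ℝ) => H p.1 p.2) (t, x) :=
    hsmooth.contDiffAt (hD.mem_nhds htx)
  -- time derivative
  have hts : ∀ᶠ s in 𝓝 t, (s, x) ∈ D := by
    have hc : ContinuousAt (fun s : ℝ => (s, x)) t :=
      (continuous_id.prodMk continuous_const).continuousAt
    exact hc.preimage_mem_nhds (hD.mem_nhds htx)
  have hVx : (∏ p ∈ Finset.univ.filter (fun p : Fin n × Fin n => p.1 < p.2),
      (x p.1 - x p.2)) ≠ 0 := vprod_ne_zero x hinj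
  have hHdiff : DifferentiableAt ℝ (fun s => H s x) t := by
    have h1 : DifferentiableAt ℝ (fun p : ℝ × (Fin n → ℝ) => H p.1 p.2) (t, x) :=
      hFC.differentiableAt (by simp)
    exact (h1.comp t ((differentiableAt_id : DifferentiableAt ℝ (id : ℝ → ℝ) t).prodMk (differentiableAt_const x)) :)
  have ha : HasDerivAt (fun s => H s x) (deriv (fun s => H s x) t) t := hHdiff.hasDerivAt
  have hderivS : deriv (fun s => S s x) t
      = (1/(n:ℝ)) * (deriv (fun s => H s x) t / H t x) := by
    have hev : (fun s => S s x) =ᶠ[𝓝 t] fun s =>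
        (1/(n:ℝ)) * (Real.log (H s x)
          - Real.log (∏ p ∈ Finset.univ.filter (fun p : Fin n × Fin n => p.1 < p.2),
              (x p.1 - x p.2))) := by
      filter_upwards [hts] with s hs
      rw [hS, Real.log_div (hpos _ hs).ne' hVx]
    rw [hev.deriv_eq]
    exact (((ha.log hH0).sub_const _).const_mul (1/(n:ℝ))).deriv
  have hheat' : - deriv (fun s => H s x) t = (1 / (2 * (n:ℝ))) * ∑ i : Fin n,
      iteratedDeriv 2 (fun y => H t (Function.update x i y)) (x i) := hheat (t, x) htx
  have key := fun i => key_spatial D hD H hpos S hS t x htx hFC hinj i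
  set b1 : Fin n → ℝ := fun i => deriv (fun y => H t (Function.update x i y)) (x i) with hb1
  set b2 : Fin n → ℝ := fun i =>
    iteratedDeriv 2 (fun y => H t (Function.update x i y)) (x i) with hb2
  set L : Fin n → ℝ := fun i => ∑ j ∈ Finset.univ.filter (· ≠ i), (x i - x j)⁻¹ with hL
  set Q : Fin n → ℝ := fun i => ∑ j ∈ Finset.univ.filter (· ≠ i), ((x i - x j)⁻¹)^2 with hQ
  have hQL : ∑ i : Fin n, (L i)^2 = ∑ i : Fin n, Q i := by
    simpa [hL, hQ] using sum_sq_eq x hinj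
  have hlapS : lap (S t) x
      = ∑ i : Fin n, (1/(n:ℝ)) * (b2 i / H t x - (b1 i / H t x)^2 + Q i) := by
    simp only [lap]
    exact Finset.sum_congr rfl fun i _ => (key i).2
  have hpd : ∀ i, pd (S t) i x = (1/(n:ℝ)) * (b1 i / H t x - L i) := fun i => (key i).1
  have hLsum : ∀ i : Fin n, (∑ j ∈ Finset.univ.filter (· ≠ i), 1/(x i - x j)) = L i := by
    intro i
    exact Finset.sum_congr rfl fun j _ => one_div _
  rw [hderivS, hlapS]
  simp only [hpd, hLsum]
  have hav : deriv (fun s => H s x) t = -((1 / (2 * (n:ℝ))) * ∑ i : Fin n, b2 i) := by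
    linarith [hheat']
  rw [hav]
  have hRHS : (1/(2*(n:ℝ))) * (∑ i : Fin n, (1/(n:ℝ))*(b2 i/H t x - (b1 i/H t x)^2 + Q i))
      + (1/2) * (∑ i : Fin n, ((1/(n:ℝ))*(b1 i/H t x - L i))^2)
      + (∑ i : Fin n, ((1/(n:ℝ)) * L i) * ((1/(n:ℝ))*(b1 i/H t x - L i)))
      = (1/(2*(n:ℝ)^2)) * ((∑ i : Fin n, b2 i)/H t x) := by
    rw [Finset.mul_sum, Finset.mul_sum, ← Finset.sum_add_distrib, ← Finset.sum_add_distrib]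
    rw [Finset.sum_congr rfl (fun i (_ : i ∈ Finset.univ) => show
        (1/(2*(n:ℝ))) * ((1/(n:ℝ))*(b2 i/H t x - (b1 i/H t x)^2 + Q i))
        + (1/2) * ((1/(n:ℝ))*(b1 i/H t x - L i))^2
        + ((1/(n:ℝ)) * L i) * ((1/(n:ℝ))*(b1 i/H t x - L i))
        = (1/(2*(n:ℝ)^2)) * (b2 i/H t x) + (1/(2*(n:ℝ)^2)) * (Q i - (L i)^2) from by
      field_simp
      ring)]
    rw [Finset.sum_add_distrib, ← Finset.mul_sum, ← Finset.mul_sum,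
      Finset.sum_sub_distrib, hQL, sub_self, mul_zero, add_zero, ← Finset.sum_div]
  rw [hRHS]
  have hT : ∀ T : ℝ, -(1/(n:ℝ) * (-(1/(2*(n:ℝ)) * T) / H t x)) = 1/(2*(n:ℝ)^2) * (T / H t x) := by
    intro T
    field_simp
  exact hT _
end

section
/- The Vandermonde determinant V(x) = ∏_{1≤i<j≤n} (x_j - x_i) is a harmonic function on ℝ^n: Σ_{k=1}^n ∂²V/∂x_k² = 0. -/
/-!
The Vandermonde polynomial is the determinant of `M = (x_i ^ j)`, and the variable `x_k` occurs
only in row `k`. Expanding along that row, `∂²/∂x_k²` replaces the entry `x_k ^ j` by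
`j (j - 1) x_k ^ (j - 2)`, so summing over `k` gives
`Σ_j j (j - 1) · det (M with column j replaced by column j - 2)`, and every such determinant
has a repeated column.
-/

open Finset Matrix

theorem Matrix.det_updateRow_eq_sum_mul_adjugate {ι R : Type*} [Fintype ι] [DecidableEq ι]
    [CommRing R] (A : Matrix ι ι R) (i : ι) (b : ι → R) :
    (A.updateRow i b).det = ∑ j, b j * A.adjugate j i := by
  rw [← cramer_transpose_apply, cramer_eq_adjugate_mulVec, ← adjugate_transpose, mulVec]
  simp [dotProduct, mul_comm]

theorem Matrix.vandermonde_update {R : Type*} [CommRing R] {n : ℕ} (v : Fin n → R)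
    (k : Fin n) (y : R) :
    vandermonde (Function.update v k y) = (vandermonde v).updateRow k (fun j => y ^ (j : ℕ)) := by
  ext i j
  rcases eq_or_ne i k with rfl | hik <;> simp [vandermonde_apply, updateRow_apply, *]

variable {𝕜 : Type*} [NontriviallyNormedField 𝕜]

theorem iteratedDeriv_sum_pow_mul {ι : Type*} (s : Finset ι) (e : ι → ℕ) (a : ι → 𝕜) (m : ℕ)
    (t : 𝕜) :
    iteratedDeriv m (fun y => ∑ j ∈ s, y ^ e j * a j) t
      = ∑ j ∈ s, (e j).descFactorial m * t ^ (e j - m) * a j := by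
  rw [iteratedDeriv_fun_sum (fun j _ => by fun_prop)]
  simp [iteratedDeriv_mul_const_field]

theorem sum_iteratedDeriv_two_det_vandermonde_update {n : ℕ} (v : Fin n → 𝕜) :
    ∑ k, iteratedDeriv 2 (fun y => (vandermonde (Function.update v k y)).det) (v k) = 0 := by
  simp_rw [vandermonde_update, det_updateRow_eq_sum_mul_adjugate, iteratedDeriv_sum_pow_mul]
  rw [Finset.sum_comm]
  refine Finset.sum_eq_zero fun j _ => ?_
  simp_rw [mul_assoc, ← Finset.mul_sum]
  rcases lt_or_ge (j : ℕ) 2 with hj | hj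
  · rw [Nat.descFactorial_eq_zero_iff_lt.mpr hj, Nat.cast_zero, zero_mul]
  · have hne : j ≠ ⟨j - 2, by omega⟩ := by simp [Fin.ext_iff]; omega
    -- the repeated column, seen through `adjugate M * M = det M • 1`
    have h := congr_fun (congr_fun (adjugate_mul (vandermonde v)) j) ⟨j - 2, by omega⟩
    simp only [mul_apply, vandermonde_apply, Matrix.smul_apply, one_apply, if_neg hne,
      smul_zero] at h
    simp_rw [mul_comm (v _ ^ _), h, mul_zero]

/-- the Vandermonde determinant `V(x) = ∏_{i<j} (x_j - x_i)` is harmonic on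
`ℝⁿ`: `Σ_k ∂²V/∂x_k² = 0`. -/
theorem stmt_5 (n : ℕ) (V : (Fin n → ℝ) → ℝ)
    (hV : ∀ x, V x = ∏ p ∈ Finset.univ.filter (fun p : Fin n × Fin n => p.1 < p.2),
      (x p.2 - x p.1))
    (x : Fin n → ℝ) :
    ∑ k : Fin n, iteratedDeriv 2 (fun y => V (Function.update x k y)) (x k) = 0 := by
  have hV_det : ∀ z, V z = (vandermonde z).det := fun z => by
    rw [hV, det_vandermonde, prod_finset_product _ univ (fun i => Ioi i) (fun p => by simp)]
  simp_rw [hV_det]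
  exact sum_iteratedDeriv_two_det_vandermonde_update x
end

section
/- For distinct real numbers x_1,…,x_n, the following algebraic identity holds: Σ_{i=1}^n ( Σ_{j : j≠i} 1/(x_i - x_j) )² = Σ_{i≠j} 1/(x_i - x_j)². Equivalently, the triple sum Σ_i Σ_{j≠i} Σ_{k≠i, k≠j} 1/((x_i - x_j)(x_i - x_k)) vanishes. -/
/-!
For pairwise distinct `a, b, c` the three terms `1 / ((a - b) * (a - c))` obtained by cyclically
rotating `(a, b, c)` add up to zero. Summing this over all triples of distinct indices and using
that a cyclic relabelling of the indices does not change the triple sum, three times the triple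
sum vanishes. Expanding the square of `∑_{j ≠ i} 1 / (x_i - x_j)` into its diagonal part and the
terms with `k ≠ j` then gives the first identity.
-/

open Finset Function

theorem one_div_sub_mul_sub_add_cyclic_eq_zero {K : Type*} [Field K] {a b c : K}
    (hab : a ≠ b) (hbc : b ≠ c) (hca : c ≠ a) :
    1 / ((a - b) * (a - c)) + 1 / ((b - c) * (b - a)) + 1 / ((c - a) * (c - b)) = 0 := by
  have := sub_ne_zero.2 hab
  have := sub_ne_zero.2 hbc
  have := sub_ne_zero.2 hca
  have := sub_ne_zero.2 hab.symm
  have := sub_ne_zero.2 hbc.symm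
  have := sub_ne_zero.2 hca.symm
  field_simp
  ring

theorem Finset.sum_sum_sum_eq_zero_of_add_cyclic_eq_zero {ι M : Type*} [Fintype ι]
    [AddCommGroup M] [IsAddTorsionFree M] (g : ι → ι → ι → M)
    (hg : ∀ i j k, g i j k + g j k i + g k i j = 0) :
    ∑ i, ∑ j, ∑ k, g i j k = 0 := by
  have hrot : ∀ f : ι → ι → ι → M, ∑ i, ∑ j, ∑ k, f j k i = ∑ i, ∑ j, ∑ k, f i j k := by
    intro f
    rw [sum_comm]
    exact sum_congr rfl fun j _ => sum_comm
  have h3 : 3 • ∑ i, ∑ j, ∑ k, g i j k = 0 := by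
    calc 3 • ∑ i, ∑ j, ∑ k, g i j k
        = ∑ i, ∑ j, ∑ k, g i j k + ∑ i, ∑ j, ∑ k, g j k i + ∑ i, ∑ j, ∑ k, g k i j := by
          rw [hrot g, ← hrot fun i j k => g k i j]; abel
      _ = 0 := by simp only [← sum_add_distrib, hg, sum_const_zero]
  exact (nsmul_eq_zero_iff_right three_ne_zero).1 h3

theorem Finset.sq_sum_eq_sum_sq_add_sum_sum_erase {ι R : Type*} [DecidableEq ι] [CommSemiring R]
    (s : Finset ι) (f : ι → R) :
    (∑ j ∈ s, f j) ^ 2 = ∑ j ∈ s, f j ^ 2 + ∑ j ∈ s, ∑ k ∈ s.erase j, f j * f k := by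
  rw [sq, sum_mul_sum, ← sum_add_distrib]
  refine sum_congr rfl fun j hj => ?_
  rw [← add_sum_erase s _ hj, sq]

theorem sum_sum_sum_one_div_sub_mul_sub_eq_zero {ι K : Type*} [Fintype ι] [DecidableEq ι]
    [Field K] [CharZero K] {x : ι → K} (hx : Injective x) :
    ∑ i, ∑ j ∈ univ.filter (· ≠ i), ∑ k ∈ univ.filter (fun k => k ≠ i ∧ k ≠ j),
      1 / ((x i - x j) * (x i - x k)) = 0 := by
  -- the guard lists the three distinctness conditions in cyclic order, so rotating `(i, j, k)`
  -- only permutes its conjuncts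
  set g : ι → ι → ι → K := fun i j k =>
    if i ≠ j ∧ j ≠ k ∧ k ≠ i then 1 / ((x i - x j) * (x i - x k)) else 0
  have hfilter : ∀ i, ∑ j ∈ univ.filter (· ≠ i), ∑ k ∈ univ.filter (fun k => k ≠ i ∧ k ≠ j),
      1 / ((x i - x j) * (x i - x k)) = ∑ j, ∑ k, g i j k := by
    intro i
    rw [sum_filter]
    refine sum_congr rfl fun j _ => ?_
    rw [sum_filter]
    split_ifs with hji
    · refine sum_congr rfl fun k _ => ?_
      simp only [g]
      congr 1
      apply propext
      grind
    · obtain rfl := not_not.1 hji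
      simp [g]
  have hcyc : ∀ i j k, g i j k + g j k i + g k i j = 0 := by
    intro i j k
    by_cases h : i ≠ j ∧ j ≠ k ∧ k ≠ i
    · obtain ⟨hij, hjk, hki⟩ := h
      simp only [g, ne_eq, hij, hjk, hki, not_false_eq_true, and_self, if_true]
      exact one_div_sub_mul_sub_add_cyclic_eq_zero (hx.ne hij) (hx.ne hjk) (hx.ne hki)
    · simp only [g]
      rw [if_neg h, if_neg (by tauto), if_neg (by tauto), add_zero, add_zero]
  rw [sum_congr rfl fun i _ => hfilter i]
  exact sum_sum_sum_eq_zero_of_add_cyclic_eq_zero g hcyc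

/-- for distinct reals `x_1,…,x_n`,
`Σ_i (Σ_{j≠i} 1/(x_i-x_j))² = Σ_{i≠j} 1/(x_i-x_j)²`; equivalently the triple sum
`Σ_i Σ_{j≠i} Σ_{k≠i,k≠j} 1/((x_i-x_j)(x_i-x_k))` vanishes. -/
theorem stmt_9 (n : ℕ) (x : Fin n → ℝ) (hx : Function.Injective x) :
    (∑ i : Fin n, (∑ j ∈ Finset.univ.filter (· ≠ i), 1 / (x i - x j))^2
      = ∑ i : Fin n, ∑ j ∈ Finset.univ.filter (· ≠ i), 1 / (x i - x j)^2) ∧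
    (∑ i : Fin n, ∑ j ∈ Finset.univ.filter (· ≠ i),
        ∑ k ∈ Finset.univ.filter (fun k => k ≠ i ∧ k ≠ j),
          1 / ((x i - x j) * (x i - x k)) = 0) := by
  have htriple := sum_sum_sum_one_div_sub_mul_sub_eq_zero hx
  refine ⟨?_, htriple⟩
  have hexpand : ∀ i, (∑ j ∈ univ.filter (· ≠ i), 1 / (x i - x j)) ^ 2
      = ∑ j ∈ univ.filter (· ≠ i), 1 / (x i - x j) ^ 2
        + ∑ j ∈ univ.filter (· ≠ i), ∑ k ∈ univ.filter (fun k => k ≠ i ∧ k ≠ j),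
            1 / ((x i - x j) * (x i - x k)) := by
    intro i
    have herase : ∀ j, (univ.filter (· ≠ i)).erase j = univ.filter (fun k => k ≠ i ∧ k ≠ j) :=
      fun j => by ext k; simp [and_comm]
    simp only [sq_sum_eq_sum_sq_add_sum_sum_erase, herase, one_div_pow, one_div_mul_one_div]
  rw [sum_congr rfl fun i _ => hexpand i, sum_add_distrib, htriple, add_zero]
end

section
/- Let ρ : ℝ → [0,∞) be a probability density supported on [a, b], and suppose there exist constants 0 < c ≤ C such that c√(x-a) ≤ ρ(x) ≤ C√(x-a) for all x ∈ [a, a+δ] for some δ > 0, and ρ is bounded. Let m(z) = ∫ ρ(x)/(z-x) dx be its Stieltjes transform. Then there exist constants c', C' > 0 and δ' > 0 such that for all 0 ≤ κ ≤ δ' and 0 < η ≤ δ': c'·η/√(κ+η) ≤ Im m(a - κ + iη) ≤ C'·η/√(κ+η), and for -δ' ≤ κ ≤ 0: c'·√(|κ|+η) ≤ Im m(a - κ + iη) ≤ C'·√(|κ|+η). -/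
/-!
For `η > 0` one has `-Im m(E + iη) = ∫ ρ x · η / ((x - E)² + η²) dx`, a Poisson integral of `ρ`.
On `[a, a + δ]` we compare `ρ` with `c√(x - a)` and `C√(x - a)`; farther out the kernel is at
most `4η/δ²` and `ρ` has mass one, while to the left of `a` the density vanishes.

For the model integral `∫₀^δ √t · η / ((t + κ)² + η²) dt`, put `s = |κ| + η`. Outside the support
(`κ ≥ 0`) the kernel is `≲ η/s²` on `[0, s]` and `≤ η/t²` beyond, and `∫_s^∞ t^(-3/2) = 2/√s`, so
the integral is `≲ η/√s`. Inside (`κ ≤ 0`) the kernel has total mass `≤ π`, which costs `√(2s)`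
on `[0, 2s]`, and beyond `2s` the same tail bound gives `≲ η/√s ≤ √s`. The lower bounds come from
windows where `√(x - a) ≳ √s` and the kernel is `≍ η/s²` (outside) or `≍ 1/η` (inside).
-/

open MeasureTheory Real Set

/-- The Poisson kernel of the upper half-plane, without its factor `1/π`. -/
noncomputable def lorentzian (η t : ℝ) : ℝ := η / (t ^ 2 + η ^ 2)

section Lorentzian

variable {η : ℝ}

lemma lorentzian_nonneg (hη : 0 ≤ η) (t : ℝ) : 0 ≤ lorentzian η t := by
  unfold lorentzian; positivity

lemma continuous_lorentzian (hη : η ≠ 0) : Continuous (lorentzian η) :=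
  continuous_const.div (by fun_prop) fun t => by positivity

lemma lorentzian_le_div {q : ℝ} (hη : 0 ≤ η) (hq : 0 < q) {t : ℝ} (h : q ≤ t ^ 2 + η ^ 2) :
    lorentzian η t ≤ η / q :=
  div_le_div_of_nonneg_left hη hq h

lemma div_le_lorentzian {q : ℝ} (hη : 0 < η) {t : ℝ} (h : t ^ 2 + η ^ 2 ≤ q) :
    η / q ≤ lorentzian η t :=
  div_le_div_of_nonneg_left hη.le (by positivity) h

lemma lorentzian_le_inv (hη : 0 < η) (t : ℝ) : lorentzian η t ≤ η⁻¹ :=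
  calc lorentzian η t ≤ η / η ^ 2 :=
        lorentzian_le_div hη.le (by positivity) (le_add_of_nonneg_left (sq_nonneg t))
    _ = η⁻¹ := by field_simp

lemma hasDerivAt_arctan_div (hη : η ≠ 0) (t : ℝ) :
    HasDerivAt (fun t => arctan (t / η)) (lorentzian η t) t := by
  refine ((hasDerivAt_id' t).div_const η).arctan.congr_deriv ?_
  unfold lorentzian
  field_simp
  ring

lemma integral_lorentzian_le_pi (hη : 0 < η) (u v κ : ℝ) :
    ∫ t in u..v, lorentzian η (t + κ) ≤ π := by
  rw [intervalIntegral.integral_comp_add_right (lorentzian η),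
    intervalIntegral.integral_eq_sub_of_hasDerivAt (fun t _ => hasDerivAt_arctan_div hη.ne' t)
      ((continuous_lorentzian hη.ne').intervalIntegrable _ _)]
  linarith [arctan_lt_pi_div_two ((v + κ) / η), neg_pi_div_two_lt_arctan ((u + κ) / η)]

end Lorentzian

lemma integrable_mul_lorentzian {ρ : ℝ → ℝ} (hρ : Integrable ρ) {η : ℝ} (hη : 0 < η) (E : ℝ) :
    Integrable fun x => ρ x * lorentzian η (x - E) :=
  hρ.mul_bdd ((continuous_lorentzian hη.ne').comp (continuous_sub_right E)).aestronglyMeasurable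
    (c := η⁻¹) (Filter.Eventually.of_forall fun x => by
      rw [Real.norm_of_nonneg (lorentzian_nonneg hη.le _)]
      exact lorentzian_le_inv hη _)

lemma im_div_sub_ofReal (r E η x : ℝ) :
    ((r : ℂ) / ((E : ℂ) + η * Complex.I - x)).im = -(r * lorentzian η (x - E)) := by
  rw [div_eq_mul_inv, Complex.im_ofReal_mul, Complex.inv_im, Complex.normSq_apply]
  simp only [Complex.sub_re, Complex.add_re, Complex.ofReal_re, Complex.mul_re, Complex.I_re,
    Complex.I_im, Complex.ofReal_im, Complex.sub_im, Complex.add_im, Complex.mul_im]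
  unfold lorentzian
  ring

lemma im_integral_div_sub_ofReal {ρ : ℝ → ℝ} (hρ : Integrable ρ) {η : ℝ} (hη : 0 < η) (E : ℝ) :
    (∫ x, (ρ x : ℂ) / ((E : ℂ) + η * Complex.I - x)).im = -∫ x, ρ x * lorentzian η (x - E) := by
  have hint : Integrable fun x : ℝ => (ρ x : ℂ) / ((E : ℂ) + η * Complex.I - x) := by
    refine hρ.ofReal.mul_bdd (c := η⁻¹) (by fun_prop) (Filter.Eventually.of_forall fun x => ?_)
    have him : η ≤ ‖(E : ℂ) + η * Complex.I - x‖ := by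
      simpa [abs_of_pos hη] using Complex.abs_im_le_norm ((E : ℂ) + η * Complex.I - x)
    rw [norm_inv]
    exact inv_anti₀ hη him
  rw [← Complex.imCLM_apply, ← Complex.imCLM.integral_comp_comm hint]
  simp only [Complex.imCLM_apply, im_div_sub_ofReal, integral_neg]

lemma integral_sqrt_mul_le_sqrt_mul_integral {g : ℝ → ℝ} {s : ℝ} (hs : 0 ≤ s)
    (hg : IntervalIntegrable g volume 0 s) (hg0 : ∀ t ∈ Icc 0 s, 0 ≤ g t) :
    ∫ t in 0..s, √t * g t ≤ √s * ∫ t in 0..s, g t := by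
  rw [← intervalIntegral.integral_const_mul]
  refine intervalIntegral.integral_mono_on hs (hg.continuousOn_mul continuous_sqrt.continuousOn)
    (hg.const_mul _) fun t ht => ?_
  exact mul_le_mul_of_nonneg_right (sqrt_le_sqrt ht.2) (hg0 t ht)

lemma sqrt_div_sq_eq_rpow {t : ℝ} (ht : 0 < t) : √t / t ^ 2 = t ^ (-(3 / 2) : ℝ) := by
  rw [sqrt_eq_rpow, show (-(3 / 2) : ℝ) = 1 / 2 - 2 by norm_num, rpow_sub ht, rpow_two]

lemma integral_rpow_neg_three_halves_le {s d : ℝ} (hs : 0 < s) (hsd : s ≤ d) :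
    ∫ t in s..d, t ^ (-(3 / 2) : ℝ) ≤ 2 / √s := by
  have h0 : (0 : ℝ) ∉ uIcc s d := by
    rw [uIcc_of_le hsd]; exact fun h => hs.not_ge h.1
  have hd : 0 < d := hs.trans_le hsd
  rw [integral_rpow (Or.inr ⟨by norm_num, h0⟩), show (-(3 / 2) : ℝ) + 1 = -(1 / 2) by norm_num,
    rpow_neg hs.le, rpow_neg hd.le, ← sqrt_eq_rpow, ← sqrt_eq_rpow]
  have : 0 ≤ √s := sqrt_nonneg s
  field_simp
  linarith

lemma integral_sqrt_mul_le_of_le_div_sq {g : ℝ → ℝ} {s d A : ℝ} (hs : 0 < s) (hsd : s ≤ d)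
    (hg : IntervalIntegrable g volume s d) (hA : 0 ≤ A) (hgA : ∀ t ∈ Icc s d, g t ≤ A / t ^ 2) :
    ∫ t in s..d, √t * g t ≤ 2 * A / √s := by
  have h0 : (0 : ℝ) ∉ uIcc s d := by
    rw [uIcc_of_le hsd]; exact fun h => hs.not_ge h.1
  calc ∫ t in s..d, √t * g t ≤ ∫ t in s..d, A * t ^ (-(3 / 2) : ℝ) := by
        refine intervalIntegral.integral_mono_on hsd
          (hg.continuousOn_mul continuous_sqrt.continuousOn)
          ((intervalIntegral.intervalIntegrable_rpow (Or.inr h0)).const_mul A) fun t ht => ?_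
        have ht0 : 0 < t := hs.trans_le ht.1
        rw [← sqrt_div_sq_eq_rpow ht0]
        calc √t * g t ≤ √t * (A / t ^ 2) := mul_le_mul_of_nonneg_left (hgA t ht) (sqrt_nonneg t)
          _ = A * (√t / t ^ 2) := by ring
    _ ≤ A * (2 / √s) := by
        rw [intervalIntegral.integral_const_mul]
        exact mul_le_mul_of_nonneg_left (integral_rpow_neg_three_halves_le hs hsd) hA
    _ = 2 * A / √s := by ring

lemma continuous_sqrt_mul_lorentzian {η : ℝ} (hη : η ≠ 0) (κ : ℝ) :
    Continuous fun t => √t * lorentzian η (t + κ) :=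
  continuous_sqrt.mul ((continuous_lorentzian hη).comp (continuous_add_const κ))

lemma integral_sqrt_mul_lorentzian_le_of_nonneg {δ κ η : ℝ} (hκ : 0 ≤ κ) (hη : 0 < η)
    (hδ : κ + η ≤ δ) :
    ∫ t in 0..δ, √t * lorentzian η (t + κ) ≤ 4 * η / √(κ + η) := by
  set s := κ + η
  have hs : 0 < s := by positivity
  have hg : Continuous fun t => lorentzian η (t + κ) :=
    (continuous_lorentzian hη.ne').comp (continuous_add_const κ)
  have hhead : ∫ t in 0..s, lorentzian η (t + κ) ≤ 2 * η / s := by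
    calc ∫ t in 0..s, lorentzian η (t + κ) ≤ ∫ _ in 0..s, η / (s ^ 2 / 2) := by
          refine intervalIntegral.integral_mono_on hs.le (hg.intervalIntegrable _ _)
            intervalIntegrable_const fun t ht => lorentzian_le_div hη.le (by positivity) ?_
          nlinarith [ht.1, sq_nonneg (κ - η)]
      _ = 2 * η / s := by rw [intervalIntegral.integral_const, smul_eq_mul]; field_simp; ring
  have htail : ∫ t in s..δ, √t * lorentzian η (t + κ) ≤ 2 * η / √s :=
    integral_sqrt_mul_le_of_le_div_sq hs hδ (hg.intervalIntegrable _ _) hη.le fun t ht =>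
      lorentzian_le_div hη.le (by nlinarith [ht.1]) (by nlinarith [ht.1])
  have hsqrt : √s * (2 * η / s) = 2 * η / √s := by
    rw [mul_div_left_comm, sqrt_div_self', mul_one_div]
  rw [← intervalIntegral.integral_add_adjacent_intervals
    ((continuous_sqrt_mul_lorentzian hη.ne' κ).intervalIntegrable 0 s)
    ((continuous_sqrt_mul_lorentzian hη.ne' κ).intervalIntegrable s δ)]
  calc (∫ t in 0..s, √t * lorentzian η (t + κ)) + ∫ t in s..δ, √t * lorentzian η (t + κ)
      ≤ √s * (2 * η / s) + 2 * η / √s := by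
        gcongr
        exact (integral_sqrt_mul_le_sqrt_mul_integral hs.le (hg.intervalIntegrable 0 s)
          fun t _ => lorentzian_nonneg hη.le (t + κ)).trans
          (mul_le_mul_of_nonneg_left hhead (sqrt_nonneg s))
    _ = 4 * η / √s := by rw [hsqrt]; ring

lemma integral_sqrt_mul_lorentzian_le_of_nonpos {δ κ η : ℝ} (hκ : κ ≤ 0) (hη : 0 < η)
    (hδ : 2 * (-κ + η) ≤ δ) :
    ∫ t in 0..δ, √t * lorentzian η (t + κ) ≤ (2 * π + 8) * √(-κ + η) := by
  set r := -κ + η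
  set s := 2 * r
  have hr : 0 < r := by linarith
  have hs : 0 < s := mul_pos two_pos hr
  have hsqrt_s : √s ≤ 2 * √r := by
    rw [sqrt_mul zero_le_two]
    have : √2 ≤ 2 := by rw [sqrt_le_left zero_le_two]; norm_num
    exact mul_le_mul_of_nonneg_right this (sqrt_nonneg r)
  have hg : Continuous fun t => lorentzian η (t + κ) :=
    (continuous_lorentzian hη.ne').comp (continuous_add_const κ)
  have hhead : ∫ t in 0..s, √t * lorentzian η (t + κ) ≤ 2 * π * √r :=
    calc ∫ t in 0..s, √t * lorentzian η (t + κ) ≤ √s * ∫ t in 0..s, lorentzian η (t + κ) :=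
          integral_sqrt_mul_le_sqrt_mul_integral hs.le (hg.intervalIntegrable 0 s)
            fun t _ => lorentzian_nonneg hη.le (t + κ)
      _ ≤ (2 * √r) * π := mul_le_mul hsqrt_s (integral_lorentzian_le_pi hη 0 s κ)
          (intervalIntegral.integral_nonneg hs.le fun t _ => lorentzian_nonneg hη.le _)
          (by positivity)
      _ = 2 * π * √r := by ring
  have htail : ∫ t in s..δ, √t * lorentzian η (t + κ) ≤ 2 * (4 * η) / √s := by
    refine integral_sqrt_mul_le_of_le_div_sq hs hδ (hg.intervalIntegrable _ _) (by positivity)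
      fun t ht => ?_
    have ht0 : 0 < t := hs.trans_le ht.1
    have hκt : t / 2 ≤ t + κ := by linarith [ht.1]
    calc lorentzian η (t + κ) ≤ η / (t ^ 2 / 4) :=
          lorentzian_le_div hη.le (by positivity) (by nlinarith)
      _ = 4 * η / t ^ 2 := by field_simp
  have htail' : 2 * (4 * η) / √s ≤ 8 * √r := by
    rw [div_le_iff₀ (sqrt_pos.2 hs)]
    have : η ≤ √r * √s :=
      calc η ≤ √r * √r := by rw [mul_self_sqrt hr.le]; linarith
        _ ≤ √r * √s := by gcongr; linarith
    linarith
  rw [← intervalIntegral.integral_add_adjacent_intervals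
    ((continuous_sqrt_mul_lorentzian hη.ne' κ).intervalIntegrable 0 s)
    ((continuous_sqrt_mul_lorentzian hη.ne' κ).intervalIntegrable s δ)]
  linarith

lemma integral_mul_lorentzian_le {ρ : ℝ → ℝ} {a δ C κ η : ℝ} (hρ : Integrable ρ)
    (hnonneg : ∀ x, 0 ≤ ρ x) (hleft : ∀ x < a, ρ x = 0)
    (hup : ∀ x ∈ Icc a (a + δ), ρ x ≤ C * √(x - a)) (hδ : 0 < δ) (hη : 0 < η)
    (hκ : -(δ / 2) ≤ κ) :
    ∫ x, ρ x * lorentzian η (x - (a - κ))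
      ≤ C * (∫ t in 0..δ, √t * lorentzian η (t + κ)) + 4 * η / δ ^ 2 * ∫ x, ρ x := by
  set F : ℝ → ℝ := fun x => C * (√(x - a) * lorentzian η (x - a + κ))
  have hF : Continuous F :=
    continuous_const.mul ((continuous_sqrt_mul_lorentzian hη.ne' κ).comp (continuous_sub_right a))
  have hFint : Integrable ((Icc a (a + δ)).indicator F) :=
    (hF.integrableOn_Icc).integrable_indicator measurableSet_Icc
  have hpoint : ∀ x, ρ x * lorentzian η (x - (a - κ))
      ≤ (Icc a (a + δ)).indicator F x + 4 * η / δ ^ 2 * ρ x := by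
    intro x
    rw [show x - (a - κ) = x - a + κ by ring]
    have hL := lorentzian_nonneg hη.le (x - a + κ)
    by_cases hx : x ∈ Icc a (a + δ)
    · rw [indicator_of_mem hx]
      have := mul_le_mul_of_nonneg_right (hup x hx) hL
      have : 0 ≤ 4 * η / δ ^ 2 * ρ x := mul_nonneg (by positivity) (hnonneg x)
      simp only [F]
      linarith
    · rw [indicator_of_notMem hx, zero_add]
      rw [mem_Icc, not_and_or, not_le, not_le] at hx
      rcases hx with hlt | hgt
      · simp [hleft x hlt]
      · rw [mul_comm]
        refine mul_le_mul_of_nonneg_right ?_ (hnonneg x)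
        have hfar : δ / 2 ≤ x - a + κ := by linarith
        calc lorentzian η (x - a + κ) ≤ η / (δ ^ 2 / 4) :=
              lorentzian_le_div hη.le (by positivity) (by nlinarith)
          _ = 4 * η / δ ^ 2 := by field_simp
  calc ∫ x, ρ x * lorentzian η (x - (a - κ))
      ≤ ∫ x, ((Icc a (a + δ)).indicator F x + 4 * η / δ ^ 2 * ρ x) :=
        integral_mono (integrable_mul_lorentzian hρ hη _) (hFint.add (hρ.const_mul _)) hpoint
    _ = C * (∫ t in 0..δ, √t * lorentzian η (t + κ)) + 4 * η / δ ^ 2 * ∫ x, ρ x := by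
        rw [integral_add hFint (hρ.const_mul _), integral_indicator measurableSet_Icc,
          integral_Icc_eq_integral_Ioc, ← intervalIntegral.integral_of_le (by linarith),
          intervalIntegral.integral_const_mul,
          intervalIntegral.integral_comp_sub_right (fun t => √t * lorentzian η (t + κ)) a,
          integral_const_mul]
        simp only [sub_self, add_sub_cancel_left]

lemma mul_sub_le_integral_mul_lorentzian {ρ : ℝ → ℝ} {a δ c κ η u v p : ℝ} (hρ : Integrable ρ)
    (hnonneg : ∀ x, 0 ≤ ρ x) (hlow : ∀ x ∈ Icc a (a + δ), c * √(x - a) ≤ ρ x) (hc : 0 ≤ c)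
    (hη : 0 < η) (hu : 0 ≤ u) (huv : u ≤ v) (hv : v ≤ δ) (hp0 : 0 ≤ p)
    (hp : ∀ t ∈ Icc u v, p ≤ lorentzian η (t + κ)) :
    c * √u * p * (v - u) ≤ ∫ x, ρ x * lorentzian η (x - (a - κ)) := by
  have hint := integrable_mul_lorentzian hρ hη (a - κ)
  have hwindow : ∀ x ∈ Icc (a + u) (a + v), c * √u * p ≤ ρ x * lorentzian η (x - (a - κ)) := by
    intro x hx
    have ht : x - a ∈ Icc u v := ⟨by linarith [hx.1], by linarith [hx.2]⟩
    rw [show x - (a - κ) = x - a + κ by ring]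
    calc c * √u * p ≤ c * √(x - a) * lorentzian η (x - a + κ) := by
          gcongr
          exacts [ht.1, hp _ ht]
      _ ≤ ρ x * lorentzian η (x - a + κ) :=
          mul_le_mul_of_nonneg_right (hlow x ⟨by linarith [hx.1], by linarith [hx.2]⟩)
            (lorentzian_nonneg hη.le _)
  calc c * √u * p * (v - u) = volume.real (Icc (a + u) (a + v)) • (c * √u * p) := by
        rw [volume_real_Icc_of_le (by linarith), smul_eq_mul]; ring
    _ ≤ ∫ x in Icc (a + u) (a + v), ρ x * lorentzian η (x - (a - κ)) :=
        setIntegral_ge_of_const_le measurableSet_Icc measure_Icc_lt_top.ne hwindow hint.integrableOn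
    _ ≤ ∫ x, ρ x * lorentzian η (x - (a - κ)) :=
        setIntegral_le_integral hint
          (Filter.Eventually.of_forall fun x => mul_nonneg (hnonneg x) (lorentzian_nonneg hη.le _))

lemma four_mul_div_sq_le {δ η A : ℝ} (hδ : 0 < δ) (h : η / √δ ≤ A) :
    4 * η / δ ^ 2 ≤ 4 / (δ * √δ) * A := by
  have hsqrt : 0 < √δ := sqrt_pos.2 hδ
  calc 4 * η / δ ^ 2 = 4 / (δ * √δ) * (η / √δ) := by
        field_simp
        rw [sq_sqrt hδ.le]
    _ ≤ 4 / (δ * √δ) * A := by gcongr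

lemma integral_mul_lorentzian_bounds_of_nonneg {ρ : ℝ → ℝ} {a δ c C κ η : ℝ}
    (hρ : Integrable ρ) (hnonneg : ∀ x, 0 ≤ ρ x) (hleft : ∀ x < a, ρ x = 0)
    (hmass : ∫ x, ρ x ≤ 1) (hsq : ∀ x ∈ Icc a (a + δ), c * √(x - a) ≤ ρ x ∧ ρ x ≤ C * √(x - a))
    (hc : 0 ≤ c) (hC : 0 ≤ C) (hκ : 0 ≤ κ) (hη : 0 < η) (hδ : 2 * (κ + η) ≤ δ) :
    c / 10 * η / √(κ + η) ≤ ∫ x, ρ x * lorentzian η (x - (a - κ)) ∧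
      ∫ x, ρ x * lorentzian η (x - (a - κ)) ≤ (4 * C + 4 / (δ * √δ)) * η / √(κ + η) := by
  set s := κ + η
  have hs : 0 < s := by positivity
  have hδ0 : 0 < δ := by linarith
  constructor
  · have hp : ∀ t ∈ Icc s (2 * s), η / (10 * s ^ 2) ≤ lorentzian η (t + κ) := fun t ht =>
      div_le_lorentzian hη (by nlinarith [ht.1, ht.2])
    have := mul_sub_le_integral_mul_lorentzian hρ hnonneg (fun x hx => (hsq x hx).1) hc hη hs.le
      (by linarith) hδ (by positivity) hp
    convert this using 1
    field_simp
    rw [sq_sqrt hs.le]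
    ring
  · have hfar : 4 * η / δ ^ 2 ≤ 4 / (δ * √δ) * (η / √s) :=
      four_mul_div_sq_le hδ0 (by gcongr; linarith)
    have hnear := integral_sqrt_mul_lorentzian_le_of_nonneg hκ hη (by linarith : s ≤ δ)
    calc ∫ x, ρ x * lorentzian η (x - (a - κ))
        ≤ C * (∫ t in 0..δ, √t * lorentzian η (t + κ)) + 4 * η / δ ^ 2 * ∫ x, ρ x :=
          integral_mul_lorentzian_le hρ hnonneg hleft (fun x hx => (hsq x hx).2) hδ0 hη
            (by linarith)
      _ ≤ C * (4 * η / √s) + 4 * η / δ ^ 2 * 1 := by gcongr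
      _ ≤ C * (4 * η / √s) + 4 / (δ * √δ) * (η / √s) := by linarith
      _ = (4 * C + 4 / (δ * √δ)) * η / √s := by ring

lemma integral_mul_lorentzian_bounds_of_nonpos {ρ : ℝ → ℝ} {a δ c C κ η : ℝ}
    (hρ : Integrable ρ) (hnonneg : ∀ x, 0 ≤ ρ x) (hleft : ∀ x < a, ρ x = 0)
    (hmass : ∫ x, ρ x ≤ 1) (hsq : ∀ x ∈ Icc a (a + δ), c * √(x - a) ≤ ρ x ∧ ρ x ≤ C * √(x - a))
    (hc : 0 ≤ c) (hC : 0 ≤ C) (hκ : κ ≤ 0) (hη : 0 < η) (hδ : 2 * (-κ + η) ≤ δ) :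
    c / 5 * √(-κ + η) ≤ ∫ x, ρ x * lorentzian η (x - (a - κ)) ∧
      ∫ x, ρ x * lorentzian η (x - (a - κ)) ≤ ((2 * π + 8) * C + 4 / (δ * √δ)) * √(-κ + η) := by
  set r := -κ + η
  have hr : 0 < r := by linarith
  have hδ0 : 0 < δ := by linarith
  constructor
  · have hp : ∀ t ∈ Icc r (r + η), η / (5 * η ^ 2) ≤ lorentzian η (t + κ) := fun t ht =>
      div_le_lorentzian hη (by nlinarith [ht.1, ht.2])
    have := mul_sub_le_integral_mul_lorentzian hρ hnonneg (fun x hx => (hsq x hx).1) hc hη hr.le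
      (by linarith) (by linarith) (by positivity) hp
    convert this using 1
    field_simp
    ring
  · have hfar : 4 * η / δ ^ 2 ≤ 4 / (δ * √δ) * √r := by
      refine four_mul_div_sq_le hδ0 ((div_le_iff₀ (sqrt_pos.2 hδ0)).2 ?_)
      calc η ≤ √r * √r := by rw [mul_self_sqrt hr.le]; linarith
        _ ≤ √r * √δ := by gcongr; linarith
    have hnear := integral_sqrt_mul_lorentzian_le_of_nonpos hκ hη hδ
    calc ∫ x, ρ x * lorentzian η (x - (a - κ))
        ≤ C * (∫ t in 0..δ, √t * lorentzian η (t + κ)) + 4 * η / δ ^ 2 * ∫ x, ρ x :=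
          integral_mul_lorentzian_le hρ hnonneg hleft (fun x hx => (hsq x hx).2) hδ0 hη
            (by linarith)
      _ ≤ C * ((2 * π + 8) * √r) + 4 * η / δ ^ 2 * 1 := by gcongr
      _ ≤ C * ((2 * π + 8) * √r) + 4 / (δ * √δ) * √r := by linarith
      _ = ((2 * π + 8) * C + 4 / (δ * √δ)) * √r := by ring

theorem stmt_14_general (ρ : ℝ → ℝ) (a b δ c C : ℝ) (hδ : 0 < δ)
    (hc : 0 < c)
    (hnonneg : ∀ x, 0 ≤ ρ x)
    (hsupp : ∀ x, x ∉ Set.Icc a b → ρ x = 0)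
    (hprob : ∫ x, ρ x = 1)
    (hsq : ∀ x ∈ Set.Icc a (a + δ),
      c * Real.sqrt (x - a) ≤ ρ x ∧ ρ x ≤ C * Real.sqrt (x - a))
    (m : ℂ → ℂ) (hm : ∀ z, m z = ∫ x : ℝ, (ρ x : ℂ) / (z - (x : ℂ))) :
    ∃ c' > 0, ∃ C' > 0, ∃ δ' > 0,
      (∀ κ η : ℝ, 0 ≤ κ → κ ≤ δ' → 0 < η → η ≤ δ' →
        c' * η / Real.sqrt (κ + η) ≤ |(m ((a : ℂ) - κ + η * Complex.I)).im| ∧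
        |(m ((a : ℂ) - κ + η * Complex.I)).im| ≤ C' * η / Real.sqrt (κ + η)) ∧
      (∀ κ η : ℝ, -δ' ≤ κ → κ ≤ 0 → 0 < η → η ≤ δ' →
        c' * Real.sqrt (|κ| + η) ≤ |(m ((a : ℂ) - κ + η * Complex.I)).im| ∧
        |(m ((a : ℂ) - κ + η * Complex.I)).im| ≤ C' * Real.sqrt (|κ| + η)) := by
  have hρ : Integrable ρ := Integrable.of_integral_ne_zero (by rw [hprob]; exact one_ne_zero)
  have hleft : ∀ x < a, ρ x = 0 := fun x hx => hsupp x fun h => hx.not_ge h.1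
  have hC : 0 ≤ C := by
    obtain ⟨hlow, hup⟩ := hsq (a + δ) ⟨by linarith, le_rfl⟩
    have : 0 < √(a + δ - a) := sqrt_pos.2 (by linarith)
    nlinarith
  have him : ∀ κ η : ℝ, 0 < η →
      |(m ((a : ℂ) - κ + η * Complex.I)).im| = ∫ x, ρ x * lorentzian η (x - (a - κ)) := by
    intro κ η hη
    rw [hm, show (a : ℂ) - κ + η * Complex.I = ((a - κ : ℝ) : ℂ) + η * Complex.I by push_cast; ring,
      im_integral_div_sub_ofReal hρ hη, abs_neg, abs_of_nonneg (integral_nonneg fun x =>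
        mul_nonneg (hnonneg x) (lorentzian_nonneg hη.le _))]
  refine ⟨c / 10, by positivity, (2 * π + 8) * C + 4 / (δ * √δ), by positivity, δ / 4,
    by positivity, fun κ η hκ hκδ hη hηδ => ?_, fun κ η hκδ hκ hη hηδ => ?_⟩
  · obtain ⟨hlow, hup⟩ := integral_mul_lorentzian_bounds_of_nonneg hρ hnonneg hleft hprob.le hsq
      hc.le hC hκ hη (by linarith)
    rw [him κ η hη]
    refine ⟨hlow, hup.trans ?_⟩
    gcongr
    linarith [pi_pos]
  · obtain ⟨hlow, hup⟩ := integral_mul_lorentzian_bounds_of_nonpos hρ hnonneg hleft hprob.le hsq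
      hc.le hC hκ hη (by linarith)
    rw [him κ η hη, abs_of_nonpos hκ]
    refine ⟨le_trans ?_ hlow, hup⟩
    gcongr
    norm_num

/-- near a square-root edge `a` of a compactly supported bounded probability
density `ρ`, the imaginary part of the Stieltjes transform `m(z) = ∫ ρ(x)/(z-x) dx`
satisfies `|Im m(a-κ+iη)| ≍ η/√(κ+η)` outside the support (`κ ≥ 0`) and
`|Im m(a-κ+iη)| ≍ √(|κ|+η)` inside the support (`κ ≤ 0`). -/
theorem stmt_14 (ρ : ℝ → ℝ) (a b δ c C B : ℝ) (hab : a < b) (hδ : 0 < δ)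
    (hc : 0 < c) (hcC : c ≤ C)
    (hmeas : Measurable ρ) (hnonneg : ∀ x, 0 ≤ ρ x)
    (hsupp : ∀ x, x ∉ Set.Icc a b → ρ x = 0)
    (hprob : ∫ x, ρ x = 1)
    (hB : ∀ x, ρ x ≤ B)
    (hsq : ∀ x ∈ Set.Icc a (a + δ),
      c * Real.sqrt (x - a) ≤ ρ x ∧ ρ x ≤ C * Real.sqrt (x - a))
    (m : ℂ → ℂ) (hm : ∀ z, m z = ∫ x : ℝ, (ρ x : ℂ) / (z - (x : ℂ))) :
    ∃ c' > 0, ∃ C' > 0, ∃ δ' > 0,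
      (∀ κ η : ℝ, 0 ≤ κ → κ ≤ δ' → 0 < η → η ≤ δ' →
        c' * η / Real.sqrt (κ + η) ≤ |(m ((a : ℂ) - κ + η * Complex.I)).im| ∧
        |(m ((a : ℂ) - κ + η * Complex.I)).im| ≤ C' * η / Real.sqrt (κ + η)) ∧
      (∀ κ η : ℝ, -δ' ≤ κ → κ ≤ 0 → 0 < η → η ≤ δ' →
        c' * Real.sqrt (|κ| + η) ≤ |(m ((a : ℂ) - κ + η * Complex.I)).im| ∧
        |(m ((a : ℂ) - κ + η * Complex.I)).im| ≤ C' * Real.sqrt (|κ| + η)) :=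
  stmt_14_general ρ a b δ c C hδ hc hnonneg hsupp hprob hsq m hm
end

section
/- Fix n ≥ 1 and let t ↦ x_1(t) < ⋯ < x_n(t) be continuous, and let a_t^{(k)}, b_t^{(ik)} be continuous coefficients with |a_t^{(k)}| ≤ C and |b_t^{(ik)}| ≤ C/n for all i,k,t. Let v(t) ∈ ℝ^n solve the linear ODE ∂_t v_k(t) = (1/n) Σ_{i≠k} (v_i(t) - v_k(t))/(x_i(t) - x_k(t))² + a_t^{(k)} v_k(t) + Σ_i b_t^{(ik)} v_i(t). Then the ℓ¹ norm satisfies ∂_t ‖v(t)‖_1 ≤ 2C ‖v(t)‖_1 at every time where v is differentiable, and consequently ‖v(t)‖_1 ≤ e^{2C(t-s)} ‖v(s)‖_1 for t ≥ s. -/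
/-!
For a sign vector `s` of `v` (a subgradient of `‖·‖₁` at `v`), `∑ₖ sₖ ∂ₜvₖ` is a one-sided
derivative of `‖v‖₁`. Since signs are monotone in the values, the coupling contributes
`-(1/2n) ∑ᵢₖ (sᵢ - sₖ)(vᵢ - vₖ)/(xᵢ - xₖ)² ≤ 0`, while the `a` and `b` terms contribute at most
`C‖v‖₁` each. Where `‖v‖₁` is differentiable, the linear function `∑ₖ sₖ vₖ` touches it from below
at `τ`, so the derivatives agree. In general, taking the sign of `∂ₜvₖ` where `vₖ = 0` gives a right
derivative of `‖v‖₁` with the same bound, and Grönwall's inequality gives the exponential estimate.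
-/

open Finset Filter Set Topology

theorem abs_sign_le_one (y : ℝ) : |(SignType.sign y : ℝ)| ≤ 1 := by
  rcases lt_trichotomy y 0 with h | h | h <;> simp [h]

section Subgradient

variable {ι : Type*}

def IsL1Subgradient (s w : ι → ℝ) : Prop :=
  ∀ k, |s k| ≤ 1 ∧ s k * w k = |w k|

theorem isL1Subgradient_sign (w : ι → ℝ) :
    IsL1Subgradient (fun k => (SignType.sign (w k) : ℝ)) w :=
  fun _ => ⟨abs_sign_le_one _, sign_mul_self _⟩

namespace IsL1Subgradient

variable {s w : ι → ℝ}

theorem sub_mul_sub_nonneg (h : IsL1Subgradient s w) (i k : ι) :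
    0 ≤ (s i - s k) * (w i - w k) := by
  have cross : ∀ i k, s k * w i ≤ |w i| := fun i k => calc
    s k * w i ≤ |s k| * |w i| := by rw [← abs_mul]; exact le_abs_self _
    _ ≤ |w i| := mul_le_of_le_one_left (abs_nonneg _) (h k).1
  nlinarith [(h i).2, (h k).2, cross i k, cross k i]

variable [Fintype ι]

theorem sum_mul_le (h : IsL1Subgradient s w) (u : ι → ℝ) :
    ∑ k, s k * u k ≤ ∑ k, |u k| :=
  sum_le_sum fun k _ => calc
    s k * u k ≤ |s k| * |u k| := by rw [← abs_mul]; exact le_abs_self _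
    _ ≤ |u k| := mul_le_of_le_one_left (abs_nonneg _) (h k).1

theorem sum_mul_self (h : IsL1Subgradient s w) : ∑ k, s k * w k = ∑ k, |w k| :=
  sum_congr rfl fun k _ => (h k).2

theorem sum_mul_sum_coupling_nonpos (h : IsL1Subgradient s w) {K : ι → ι → ℝ}
    (hK : ∀ i k, 0 ≤ K i k) (hK_symm : ∀ i k, K i k = K k i) :
    ∑ k, s k * ∑ i, K i k * (w i - w k) ≤ 0 := by
  have swap : ∑ k, s k * ∑ i, K i k * (w i - w k) = ∑ k, ∑ i, s i * (K i k * (w k - w i)) := by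
    simp only [mul_sum]
    rw [sum_comm]
    exact sum_congr rfl fun k _ => sum_congr rfl fun i _ => by rw [hK_symm]
  have pair : ∑ k, s k * ∑ i, K i k * (w i - w k) + ∑ k, ∑ i, s i * (K i k * (w k - w i)) =
      -∑ k, ∑ i, K i k * ((s i - s k) * (w i - w k)) := by
    simp only [mul_sum, ← sum_add_distrib, ← sum_neg_distrib]
    exact sum_congr rfl fun k _ => sum_congr rfl fun i _ => by ring
  have hnonneg : 0 ≤ ∑ k, ∑ i, K i k * ((s i - s k) * (w i - w k)) :=
    sum_nonneg fun k _ => sum_nonneg fun i _ => mul_nonneg (hK i k) (h.sub_mul_sub_nonneg i k)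
  linarith

theorem sum_mul_diag_le (h : IsL1Subgradient s w) {a : ι → ℝ} {A : ℝ} (ha : ∀ k, |a k| ≤ A) :
    ∑ k, s k * (a k * w k) ≤ A * ∑ k, |w k| := calc
  ∑ k, s k * (a k * w k) ≤ ∑ k, |a k * w k| := h.sum_mul_le _
  _ ≤ ∑ k, A * |w k| := sum_le_sum fun k _ => by
    rw [abs_mul]; exact mul_le_mul_of_nonneg_right (ha k) (abs_nonneg _)
  _ = A * ∑ k, |w k| := (mul_sum _ _ _).symm

theorem sum_mul_sum_le (h : IsL1Subgradient s w) {b : ι → ι → ℝ} {B : ℝ}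
    (hb : ∀ i, ∑ k, |b i k| ≤ B) :
    ∑ k, s k * ∑ i, b i k * w i ≤ B * ∑ i, |w i| := calc
  ∑ k, s k * ∑ i, b i k * w i = ∑ i, (∑ k, s k * b i k) * w i := by
    simp only [mul_sum, sum_mul]
    rw [sum_comm]
    exact sum_congr rfl fun i _ => sum_congr rfl fun k _ => by ring
  _ ≤ ∑ i, B * |w i| := sum_le_sum fun i _ => by
    have hcol : |∑ k, s k * b i k| ≤ B := calc
      |∑ k, s k * b i k| ≤ ∑ k, |s k * b i k| := abs_sum_le_sum_abs _ _
      _ ≤ ∑ k, |b i k| := sum_le_sum fun k _ => by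
        rw [abs_mul]; exact mul_le_of_le_one_left (abs_nonneg _) (h k).1
      _ ≤ B := hb i
    calc (∑ k, s k * b i k) * w i ≤ |∑ k, s k * b i k| * |w i| := by
          rw [← abs_mul]; exact le_abs_self _
      _ ≤ B * |w i| := mul_le_mul_of_nonneg_right hcol (abs_nonneg _)
  _ = B * ∑ i, |w i| := (mul_sum _ _ _).symm

end IsL1Subgradient

end Subgradient

noncomputable def drift {n : ℕ} (x a : Fin n → ℝ) (b : Fin n → Fin n → ℝ) (w : Fin n → ℝ)
    (k : Fin n) : ℝ :=
  (1 / n) * ∑ i ∈ univ.filter (· ≠ k), (w i - w k) / (x i - x k) ^ 2 + a k * w k +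
    ∑ i, b i k * w i

theorem sum_abs_le_of_abs_le_div {n : ℕ} {b : Fin n → ℝ} {C : ℝ} (hb : ∀ k, |b k| ≤ C / n)
    (hn : n ≠ 0) : ∑ k, |b k| ≤ C := calc
  ∑ k, |b k| ≤ ∑ _k : Fin n, C / n := sum_le_sum fun k _ => hb k
  _ = C := by simp [field]

theorem IsL1Subgradient.sum_mul_drift_le {n : ℕ} {s w x a : Fin n → ℝ} {b : Fin n → Fin n → ℝ}
    {C : ℝ} (h : IsL1Subgradient s w) (ha : ∀ k, |a k| ≤ C) (hb : ∀ i k, |b i k| ≤ C / n) :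
    ∑ k, s k * drift x a b w k ≤ 2 * C * ∑ k, |w k| := by
  have coupling : ∀ k, ∑ i ∈ univ.filter (· ≠ k), (w i - w k) / (x i - x k) ^ 2 =
      ∑ i, ((x i - x k) ^ 2)⁻¹ * (w i - w k) := fun k => by
    rw [filter_ne', sum_erase _ (by simp)]
    exact sum_congr rfl fun i _ => div_eq_inv_mul _ _
  have hcoupling : ∑ k, s k * ∑ i, ((x i - x k) ^ 2)⁻¹ * (w i - w k) ≤ 0 :=
    h.sum_mul_sum_coupling_nonpos (fun i k => by positivity)
      (fun i k => by rw [← neg_sub, neg_sq])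
  have hdiag := h.sum_mul_diag_le ha
  have hoff := h.sum_mul_sum_le fun i => sum_abs_le_of_abs_le_div (hb i) (Fin.pos i).ne'
  have hsplit : ∑ k, s k * drift x a b w k = (1 / n) * ∑ k, s k * ∑ i, ((x i - x k) ^ 2)⁻¹ *
      (w i - w k) + ∑ k, s k * (a k * w k) + ∑ k, s k * ∑ i, b i k * w i := by
    simp only [drift, coupling, mul_add, sum_add_distrib, mul_left_comm (s _) (1 / (n : ℝ)),
      ← mul_sum]
  have : (1 / (n : ℝ)) * ∑ k, s k * ∑ i, ((x i - x k) ^ 2)⁻¹ * (w i - w k) ≤ 0 :=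
    mul_nonpos_of_nonneg_of_nonpos (by positivity) hcoupling
  linarith

theorem HasDerivAt.exists_hasDerivWithinAt_Ici_abs {f : ℝ → ℝ} {f' t : ℝ}
    (hf : HasDerivAt f f' t) :
    ∃ σ, |σ| ≤ 1 ∧ σ * f t = |f t| ∧ HasDerivWithinAt (fun z => |f z|) (σ * f') (Ici t) t := by
  by_cases h0 : f t = 0
  · refine ⟨SignType.sign f', abs_sign_le_one f', by simp [h0], ?_⟩
    -- to the right of a zero of `f`, the slope of `|f|` is the absolute value of the slope of `f`
    rw [sign_mul_self, ← hasDerivWithinAt_Ioi_iff_Ici,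
      hasDerivWithinAt_iff_tendsto_slope' Set.self_notMem_Ioi]
    have hslope : Tendsto (slope f t) (𝓝[>] t) (𝓝 f') :=
      (hasDerivAt_iff_tendsto_slope.1 hf).mono_left (nhdsWithin_mono t fun z hz => ne_of_gt hz)
    refine ((continuous_abs.tendsto f').comp hslope).congr' ?_
    filter_upwards [self_mem_nhdsWithin] with z hz
    simp [slope_def_field, h0, abs_div, abs_of_pos (sub_pos.2 (mem_Ioi.1 hz))]
  · exact ⟨SignType.sign (f t), abs_sign_le_one _, sign_mul_self _,
      ((hasDerivAt_abs h0).comp t hf).hasDerivWithinAt⟩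

section SumAbs

variable {ι : Type*} [Fintype ι] {f : ℝ → ι → ℝ} {f' : ι → ℝ} {t : ℝ}

theorem exists_isL1Subgradient_hasDerivWithinAt_sum_abs
    (hf : ∀ k, HasDerivAt (fun z => f z k) (f' k) t) :
    ∃ s, IsL1Subgradient s (f t) ∧
      HasDerivWithinAt (fun z => ∑ k, |f z k|) (∑ k, s k * f' k) (Ici t) t := by
  choose s hs hsf hderiv using fun k => (hf k).exists_hasDerivWithinAt_Ici_abs
  exact ⟨s, fun k => ⟨hs k, hsf k⟩, HasDerivWithinAt.fun_sum fun k _ => hderiv k⟩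

theorem deriv_sum_abs_eq_sum_mul {s : ι → ℝ} (hf : ∀ k, HasDerivAt (fun z => f z k) (f' k) t)
    (hdiff : DifferentiableAt ℝ (fun z => ∑ k, |f z k|) t) (hs : IsL1Subgradient s (f t)) :
    deriv (fun z => ∑ k, |f z k|) t = ∑ k, s k * f' k := by
  have hlin : HasDerivAt (fun z => ∑ k, s k * f z k) (∑ k, s k * f' k) t :=
    HasDerivAt.fun_sum fun k _ => (hf k).const_mul (s k)
  have hmin : IsLocalMin (fun z => ∑ k, |f z k| - ∑ k, s k * f z k) t :=
    Eventually.of_forall fun z => by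
      simp only [hs.sum_mul_self, sub_self, sub_nonneg]
      exact hs.sum_mul_le (f z)
  have := hmin.deriv_eq_zero
  rw [deriv_fun_sub hdiff hlin.differentiableAt, hlin.deriv] at this
  linarith

end SumAbs

theorem le_exp_mul_of_hasDerivWithinAt_Ici_le {N : ℝ → ℝ} {K s t : ℝ}
    (hN : ContinuousOn N (Icc s t))
    (hderiv : ∀ u ∈ Ico s t, ∃ d, HasDerivWithinAt N d (Ici u) u ∧ d ≤ K * N u) (hst : s ≤ t) :
    N t ≤ Real.exp (K * (t - s)) * N s := by
  have hslope : ∀ u ∈ Ico s t, ∀ r, K * N u < r →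
      ∃ᶠ z in 𝓝[>] u, (z - u)⁻¹ * (N z - N u) < r := fun u hu r hr => by
    obtain ⟨d, hd, hdle⟩ := hderiv u hu
    exact hd.liminf_right_slope_le (hdle.trans_lt hr)
  have := le_gronwallBound_of_liminf_deriv_right_le (K := K) (ε := 0) hN hslope le_rfl
    (fun u _ => (add_zero _).ge) t ⟨hst, le_rfl⟩
  rwa [gronwallBound_ε0, mul_comm] at this

theorem stmt_15_general (n : ℕ) (C : ℝ)
    (x : ℝ → Fin n → ℝ)
    (a : ℝ → Fin n → ℝ) (b : ℝ → Fin n → Fin n → ℝ)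
    (ha : ∀ t k, |a t k| ≤ C) (hb : ∀ t i k, |b t i k| ≤ C / n)
    (v : ℝ → Fin n → ℝ)
    (hv : ∀ t k, HasDerivAt (fun s => v s k)
      ((1 / n) * ∑ i ∈ Finset.univ.filter (· ≠ k),
          (v t i - v t k) / (x t i - x t k)^2
        + a t k * v t k + ∑ i : Fin n, b t i k * v t i) t) :
    (∀ τ : ℝ, DifferentiableAt ℝ (fun t => ∑ i : Fin n, |v t i|) τ →
      deriv (fun t => ∑ i : Fin n, |v t i|) τ ≤ 2 * C * ∑ i : Fin n, |v τ i|) ∧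
    (∀ s t : ℝ, s ≤ t →
      ∑ i : Fin n, |v t i| ≤ Real.exp (2 * C * (t - s)) * ∑ i : Fin n, |v s i|) := by
  have hdrift : ∀ t k, HasDerivAt (fun s => v s k) (drift (x t) (a t) (b t) (v t) k) t := hv
  have hcont : Continuous fun t => ∑ i, |v t i| :=
    continuous_finsetSum _ fun i _ =>
      (continuous_iff_continuousAt.2 fun t => (hv t i).continuousAt).abs
  refine ⟨fun τ hτ => ?_, fun s t hst => ?_⟩
  · rw [deriv_sum_abs_eq_sum_mul (hdrift τ) hτ (isL1Subgradient_sign _)]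
    exact (isL1Subgradient_sign _).sum_mul_drift_le (ha τ) (hb τ)
  · refine le_exp_mul_of_hasDerivWithinAt_Ici_le hcont.continuousOn (fun u _ => ?_) hst
    obtain ⟨σ, hσ, hderiv⟩ := exists_isL1Subgradient_hasDerivWithinAt_sum_abs (hdrift u)
    exact ⟨_, hderiv, hσ.sum_mul_drift_le (ha u) (hb u)⟩

/-- ℓ¹-contraction for the coupled linear ODE system
`∂_t v_k = (1/n) Σ_{i≠k} (v_i - v_k)/(x_i - x_k)² + a_t^{(k)} v_k + Σ_i b_t^{(ik)} v_i`
with `|a| ≤ C`, `|b| ≤ C/n`: the ℓ¹ norm satisfies `∂_t ‖v‖₁ ≤ 2C‖v‖₁` at every point of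
differentiability, and consequently `‖v(t)‖₁ ≤ e^{2C(t-s)} ‖v(s)‖₁` for `t ≥ s`. -/
theorem stmt_15 (n : ℕ) (hn : 1 ≤ n) (C : ℝ) (hC : 0 ≤ C)
    (x : ℝ → Fin n → ℝ) (hx_cont : Continuous x)
    (hx_mono : ∀ t, StrictMono (x t))
    (a : ℝ → Fin n → ℝ) (b : ℝ → Fin n → Fin n → ℝ)
    (ha_cont : Continuous a) (hb_cont : Continuous b)
    (ha : ∀ t k, |a t k| ≤ C) (hb : ∀ t i k, |b t i k| ≤ C / n)
    (v : ℝ → Fin n → ℝ)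
    (hv : ∀ t k, HasDerivAt (fun s => v s k)
      ((1 / n) * ∑ i ∈ Finset.univ.filter (· ≠ k),
          (v t i - v t k) / (x t i - x t k)^2
        + a t k * v t k + ∑ i : Fin n, b t i k * v t i) t) :
    (∀ τ : ℝ, DifferentiableAt ℝ (fun t => ∑ i : Fin n, |v t i|) τ →
      deriv (fun t => ∑ i : Fin n, |v t i|) τ ≤ 2 * C * ∑ i : Fin n, |v τ i|) ∧
    (∀ s t : ℝ, s ≤ t →
      ∑ i : Fin n, |v t i| ≤ Real.exp (2 * C * (t - s)) * ∑ i : Fin n, |v s i|) :=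
  stmt_15_general n C x a b ha hb v hv
end
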